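/- arXiv:2503.03217 — 5 statements merged into one kernel-verified Lean document; each statement's English description precedes it below -/
import Mathlib

section
/- Let f : ℝⁿ → ℝ ∪ {+∞} be a proper lower semicontinuous convex function with f(0) = 0 whose subgradient mapping ∂f has a graph that is a linear subspace of ℝⁿ × ℝⁿ. Then the domain S = dom ∂f is a linear subspace, S⊥ = ∂f(0), and there exists a symmetric positive semidefinite linear operator M : ℝⁿ → ℝⁿ with range contained in S such that f(x) = ½⟨M x, x⟩ + δ_S(x) for all x ∈ ℝⁿ, where δ_S is the indicator function of S. -/
/-!
Scaling a pair `(x, v)` of the graph of `∂f`, a subspace, gives `t • v ∈ ∂f (t • x)` for all real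
`t`, so `t ↦ f (t • x)` has derivative `t ⟪v, x⟫` and `f x = ⟪v, x⟫ / 2`. For two pairs `(x, a)`,
`(y, b)` of the graph, the tangent inequality of this quadratic form at `x` in direction `y` forces
`⟪a, y⟫ = ⟪b, x⟫`; this gives `∂f 0 ⊆ Sᗮ` for the projection `S` of the graph, and the symmetry of
`M`, a linear selection of the graph over `S` composed with the orthogonal projections onto `S`.
Finally, a point `z` of `dom f` is a limit of the minimizers of `f + κ/2 ‖· - z‖²` as `κ → ∞`; these
lie in `dom ∂f = S`, which is closed, so `f = ⊤` off `S`.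
-/

open scoped RealInnerProductSpace
open Filter Topology Classical

noncomputable section

def Subdiff {n : ℕ} (f : EuclideanSpace ℝ (Fin n) → EReal) (x : EuclideanSpace ℝ (Fin n)) :
    Set (EuclideanSpace ℝ (Fin n)) :=
  {v | ∀ y, f x + ((⟪v, y - x⟫ : ℝ) : EReal) ≤ f y}

def ProperFn {n : ℕ} (f : EuclideanSpace ℝ (Fin n) → EReal) : Prop :=
  (∀ x, f x ≠ ⊥) ∧ ∃ x, f x ≠ ⊤

def ConvexFn {n : ℕ} (f : EuclideanSpace ℝ (Fin n) → EReal) : Prop :=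
  ∀ x y : EuclideanSpace ℝ (Fin n), ∀ a b : ℝ, 0 ≤ a → 0 ≤ b → a + b = 1 →
    f (a • x + b • y) ≤ (a : EReal) * f x + (b : EReal) * f y

theorem eq_of_abs_sub_le_mul_sq {ψ : ℝ → ℝ} {C : ℝ} (h : ∀ s t, |ψ s - ψ t| ≤ C * (s - t) ^ 2)
    (s t : ℝ) : ψ s = ψ t := by
  have hderiv (t : ℝ) : HasDerivAt ψ 0 t := by
    rw [hasDerivAt_iff_isLittleO]
    simp only [smul_zero, sub_zero]
    refine (Asymptotics.IsBigO.of_bound C (Eventually.of_forall fun s => ?_)).trans_isLittleO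
      (Asymptotics.isLittleO_pow_sub_sub t one_lt_two)
    simpa only [Real.norm_eq_abs, abs_pow, sq_abs] using h s t
  exact is_const_of_deriv_eq_zero (fun t => (hderiv t).differentiableAt)
    (fun t => (hderiv t).deriv) s t

theorem eq_add_mul_sq_div_two_of_forall_add_mul_le {g : ℝ → ℝ} {c : ℝ}
    (hsub : ∀ s t, g t + t * (s - t) * c ≤ g s) (s : ℝ) : g s = g 0 + c * s ^ 2 / 2 := by
  have hconst := eq_of_abs_sub_le_mul_sq (ψ := fun t => g t - c * t ^ 2 / 2) (C := c / 2)
    (fun s t => abs_le.2 ⟨by nlinarith [hsub s t, hsub t s], by nlinarith [hsub s t, hsub t s]⟩) s 0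
  linarith

variable {n : ℕ} {f : EuclideanSpace ℝ (Fin n) → EReal}

theorem ProperFn.of_nonneg (hnn : ∀ y, 0 ≤ f y) {x : EuclideanSpace ℝ (Fin n)} (hx : f x ≠ ⊤) :
    ProperFn f :=
  ⟨fun y => ne_bot_of_le_ne_bot EReal.zero_ne_bot (hnn y), x, hx⟩

theorem nonneg_of_zero_mem_subdiff_zero (h0 : f 0 = 0) (h : 0 ∈ Subdiff f 0) (y) : 0 ≤ f y := by
  simpa [h0] using h y

theorem ne_top_of_mem_subdiff (hf : ProperFn f) {x v : EuclideanSpace ℝ (Fin n)}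
    (hv : v ∈ Subdiff f x) : f x ≠ ⊤ := by
  obtain ⟨y, hy⟩ := hf.2
  intro hx
  have := hv y
  rw [hx, EReal.top_add_coe, top_le_iff] at this
  exact hy this

theorem toReal_add_inner_le_of_mem_subdiff (hf : ProperFn f) {x v y : EuclideanSpace ℝ (Fin n)}
    (hv : v ∈ Subdiff f x) (hy : f y ≠ ⊤) : (f x).toReal + ⟪v, y - x⟫ ≤ (f y).toReal := by
  have h := hv y
  rw [← EReal.coe_toReal (ne_top_of_mem_subdiff hf hv) (hf.1 x), ← EReal.coe_toReal hy (hf.1 y),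
    ← EReal.coe_add, EReal.coe_le_coe_iff] at h
  exact h

theorem eq_add_half_inner_of_smul_mem_subdiff (hf : ProperFn f) {x v : EuclideanSpace ℝ (Fin n)}
    (hline : ∀ t : ℝ, t • v ∈ Subdiff f (t • x)) : f x = f 0 + ((⟪v, x⟫ / 2 : ℝ) : EReal) := by
  have hsub (s t : ℝ) : (f (t • x)).toReal + t * (s - t) * ⟪v, x⟫ ≤ (f (s • x)).toReal := by
    have h := toReal_add_inner_le_of_mem_subdiff hf (hline t) (ne_top_of_mem_subdiff hf (hline s))
    rwa [← sub_smul, real_inner_smul_left, real_inner_smul_right, ← mul_assoc] at h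
  have h1 := eq_add_mul_sq_div_two_of_forall_add_mul_le hsub 1
  simp only [one_smul, zero_smul, one_pow, mul_one] at h1
  have hx := ne_top_of_mem_subdiff hf (hline 1)
  have h0 := ne_top_of_mem_subdiff hf (hline 0)
  simp only [one_smul, zero_smul] at hx h0
  rw [← EReal.coe_toReal hx (hf.1 x), ← EReal.coe_toReal h0 (hf.1 0), ← EReal.coe_add, h1]

section Graph

variable {G : Submodule ℝ (EuclideanSpace ℝ (Fin n) × EuclideanSpace ℝ (Fin n))}

theorem eq_half_inner_of_mem_graph (h0 : f 0 = 0)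
    (hG : ∀ x v, (x, v) ∈ G ↔ v ∈ Subdiff f x) {x v : EuclideanSpace ℝ (Fin n)}
    (hxv : (x, v) ∈ G) : f x = ((⟪v, x⟫ / 2 : ℝ) : EReal) := by
  have hf : ProperFn f := .of_nonneg
    (nonneg_of_zero_mem_subdiff_zero h0 ((hG 0 0).1 G.zero_mem)) (h0 ▸ EReal.zero_ne_top)
  simpa [h0] using eq_add_half_inner_of_smul_mem_subdiff hf fun t => (hG _ _).1 (G.smul_mem t hxv)

theorem inner_nonneg_of_mem_graph (h0 : f 0 = 0)
    (hG : ∀ x v, (x, v) ∈ G ↔ v ∈ Subdiff f x) {x v : EuclideanSpace ℝ (Fin n)}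
    (hxv : (x, v) ∈ G) : 0 ≤ ⟪v, x⟫ := by
  have h := nonneg_of_zero_mem_subdiff_zero h0 ((hG 0 0).1 G.zero_mem) x
  rw [eq_half_inner_of_mem_graph h0 hG hxv, EReal.coe_nonneg] at h
  linarith

/-- The quadratic form `t ↦ ⟪a + t b, x + t y⟫ / 2` of the line through `(x, a)` and `(y, b)` lies
above its tangent at `t = 0`; this forces the linear coefficient `⟪b, x⟫ - ⟪a, y⟫` to vanish. -/
theorem inner_eq_of_mem_graph (h0 : f 0 = 0)
    (hG : ∀ x v, (x, v) ∈ G ↔ v ∈ Subdiff f x) {x y a b : EuclideanSpace ℝ (Fin n)}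
    (hxa : (x, a) ∈ G) (hyb : (y, b) ∈ G) : ⟪a, y⟫ = ⟪b, x⟫ := by
  have hquad (t : ℝ) : 0 ≤ ⟪b, y⟫ / 2 * (t * t) + (⟪b, x⟫ - ⟪a, y⟫) / 2 * t + 0 := by
    have hxty : (x + t • y, a + t • b) ∈ G := G.add_mem hxa (G.smul_mem t hyb)
    have h := (hG x a).1 hxa (x + t • y)
    rw [eq_half_inner_of_mem_graph h0 hG hxa, eq_half_inner_of_mem_graph h0 hG hxty,
      ← EReal.coe_add, EReal.coe_le_coe_iff, add_sub_cancel_left] at h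
    simp only [inner_add_left, inner_add_right, real_inner_smul_left, real_inner_smul_right] at h
    linarith
  have hd := discrim_le_zero hquad
  rw [discrim, mul_zero, sub_zero] at hd
  nlinarith [sq_nonneg ((⟪b, x⟫ - ⟪a, y⟫) / 2)]

theorem subdiff_zero_subset_orthogonal_map_fst (h0 : f 0 = 0)
    (hG : ∀ x v, (x, v) ∈ G ↔ v ∈ Subdiff f x) :
    Subdiff f 0 ⊆ ((G.map (LinearMap.fst ℝ _ _))ᗮ : Set (EuclideanSpace ℝ (Fin n))) :=
  fun v hv => (Submodule.mem_orthogonal _ v).2 fun u hu => by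
    obtain ⟨⟨u, w⟩, huw, rfl⟩ := Submodule.mem_map.1 hu
    simpa [real_inner_comm] using inner_eq_of_mem_graph h0 hG ((hG 0 v).2 hv) huw

end Graph

theorem orthogonal_subset_subdiff_zero (h0 : f 0 = 0) (hnn : ∀ y, 0 ≤ f y)
    {S : Submodule ℝ (EuclideanSpace ℝ (Fin n))} (hdom : ∀ z, f z ≠ ⊤ → z ∈ S) :
    (Sᗮ : Set (EuclideanSpace ℝ (Fin n))) ⊆ Subdiff f 0 := by
  intro v hv y
  by_cases hy : f y = ⊤
  · exact hy ▸ le_top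
  rw [h0, sub_zero, real_inner_comm, (S.mem_orthogonal v).1 hv y (hdom y hy), EReal.coe_zero,
    zero_add]
  exact hnn y

theorem exists_forall_add_sq_le (hlsc : LowerSemicontinuous f) (hnn : ∀ y, 0 ≤ f y)
    {z : EuclideanSpace ℝ (Fin n)} (hz : f z ≠ ⊤) {κ : ℝ} (hκ : 0 < κ) :
    ∃ p, ∀ y, f p + ((κ / 2 * ‖p - z‖ ^ 2 : ℝ) : EReal) ≤
      f y + ((κ / 2 * ‖y - z‖ ^ 2 : ℝ) : EReal) := by
  set r := (f z).toReal
  have hr : 0 ≤ r := EReal.toReal_nonneg (hnn z)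
  have hq : Continuous fun y : EuclideanSpace ℝ (Fin n) => ((κ / 2 * ‖y - z‖ ^ 2 : ℝ) : EReal) :=
    continuous_coe_real_ereal.comp (by fun_prop)
  have hlsc' := hlsc.add' hq.lowerSemicontinuous fun y =>
    EReal.continuousAt_add (Or.inr (EReal.coe_ne_bot _)) (Or.inr (EReal.coe_ne_top _))
  -- outside this ball the penalty alone is at least `f z`
  set R := Real.sqrt (2 * r / κ)
  obtain ⟨p, -, hp⟩ := (hlsc'.lowerSemicontinuousOn _).exists_isMinOn
    ⟨z, Metric.mem_closedBall_self (Real.sqrt_nonneg _)⟩ (isCompact_closedBall z R)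
  refine ⟨p, fun y => ?_⟩
  by_cases hy : y ∈ Metric.closedBall z R
  · exact isMinOn_iff.1 hp y hy
  have hRy : R ^ 2 ≤ ‖y - z‖ ^ 2 := by
    rw [Metric.mem_closedBall, not_le, dist_eq_norm] at hy
    exact pow_le_pow_left₀ (Real.sqrt_nonneg _) hy.le 2
  rw [Real.sq_sqrt (by positivity)] at hRy
  calc f p + ((κ / 2 * ‖p - z‖ ^ 2 : ℝ) : EReal)
      ≤ f z + ((κ / 2 * ‖z - z‖ ^ 2 : ℝ) : EReal) :=
        isMinOn_iff.1 hp z (Metric.mem_closedBall_self (Real.sqrt_nonneg _))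
    _ = (r : EReal) := by
        rw [sub_self, norm_zero, zero_pow two_ne_zero, mul_zero, EReal.coe_zero, add_zero,
          EReal.coe_toReal hz (ne_bot_of_le_ne_bot EReal.zero_ne_bot (hnn z))]
    _ ≤ ((κ / 2 * ‖y - z‖ ^ 2 : ℝ) : EReal) := by
        rw [EReal.coe_le_coe_iff]
        calc r = κ / 2 * (2 * r / κ) := by field_simp
          _ ≤ κ / 2 * ‖y - z‖ ^ 2 := by gcongr
    _ ≤ f y + ((κ / 2 * ‖y - z‖ ^ 2 : ℝ) : EReal) := le_add_of_nonneg_left (hnn y)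

theorem smul_sub_mem_subdiff_of_forall_add_sq_le (hbot : ∀ x, f x ≠ ⊥) (hconv : ConvexFn f)
    {z p : EuclideanSpace ℝ (Fin n)} {κ : ℝ}
    (hp : ∀ y, f p + ((κ / 2 * ‖p - z‖ ^ 2 : ℝ) : EReal) ≤
      f y + ((κ / 2 * ‖y - z‖ ^ 2 : ℝ) : EReal)) (hfp : f p ≠ ⊤) :
    κ • (z - p) ∈ Subdiff f p := by
  intro y
  by_cases hy : f y = ⊤
  · rw [hy]
    exact le_top
  obtain ⟨a, ha⟩ : ∃ a : ℝ, f y = a := ⟨_, (EReal.coe_toReal hy (hbot y)).symm⟩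
  obtain ⟨b, hb⟩ : ∃ b : ℝ, f p = b := ⟨_, (EReal.coe_toReal hfp (hbot p)).symm⟩
  rw [ha, hb, ← EReal.coe_add, EReal.coe_le_coe_iff]
  set A := a - b - ⟪κ • (z - p), y - p⟫
  set C := κ / 2 * ‖y - p‖ ^ 2
  have hinner : ⟪κ • (z - p), y - p⟫ = -(κ * ⟪p - z, y - p⟫) := by
    rw [real_inner_smul_left, ← neg_sub p z, inner_neg_left, mul_neg]
  have hA_add (t : ℝ) (ht0 : 0 < t) (ht1 : t ≤ 1) : 0 ≤ A + t * C := by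
    have hcv := hconv p y (1 - t) t (by linarith) ht0.le (by ring)
    rw [ha, hb, ← EReal.coe_mul, ← EReal.coe_mul, ← EReal.coe_add] at hcv
    have hmin := (hp ((1 - t) • p + t • y)).trans (add_le_add hcv le_rfl)
    rw [hb, ← EReal.coe_add, ← EReal.coe_add, EReal.coe_le_coe_iff] at hmin
    have hexp : ‖(1 - t) • p + t • y - z‖ ^ 2 =
        ‖p - z‖ ^ 2 + 2 * t * ⟪p - z, y - p⟫ + t ^ 2 * ‖y - p‖ ^ 2 := by
      rw [show (1 - t) • p + t • y - z = (p - z) + t • (y - p) by module, norm_add_sq_real,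
        real_inner_smul_right, norm_smul, mul_pow, Real.norm_eq_abs, sq_abs]
      ring
    rw [hexp] at hmin
    refine nonneg_of_mul_nonneg_right ?_ ht0
    simp only [A, C, hinner]
    linarith
  have hA : 0 ≤ A := by
    have hcont : Continuous fun t : ℝ => A + t * C := by fun_prop
    have hlim : Tendsto (fun t => A + t * C) (𝓝[>] 0) (𝓝 A) := by
      simpa using (hcont.tendsto 0).mono_left nhdsWithin_le_nhds
    refine ge_of_tendsto hlim ?_
    filter_upwards [Ioc_mem_nhdsGT one_pos] with t ht using hA_add t ht.1 ht.2
  linarith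

theorem mem_closure_setOf_subdiff_nonempty (hlsc : LowerSemicontinuous f) (hconv : ConvexFn f)
    (hnn : ∀ y, 0 ≤ f y) {z : EuclideanSpace ℝ (Fin n)} (hz : f z ≠ ⊤) :
    z ∈ closure {x | (Subdiff f x).Nonempty} := by
  have hbot (x : EuclideanSpace ℝ (Fin n)) : f x ≠ ⊥ :=
    ne_bot_of_le_ne_bot EReal.zero_ne_bot (hnn x)
  set r := (f z).toReal
  have hr : 0 ≤ r := EReal.toReal_nonneg (hnn z)
  rw [Metric.mem_closure_iff]
  intro ε hε
  set κ := 2 * (r + 1) / ε ^ 2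
  obtain ⟨p, hp⟩ := exists_forall_add_sq_le hlsc hnn hz (κ := κ) (by positivity)
  have hpz := hp z
  rw [sub_self, norm_zero, zero_pow two_ne_zero, mul_zero, EReal.coe_zero, add_zero,
    ← EReal.coe_toReal hz (hbot z)] at hpz
  have hfp : f p ≠ ⊤ := ne_top_of_le_ne_top (EReal.coe_ne_top r)
    ((le_add_of_nonneg_right (EReal.coe_nonneg.2 (by positivity))).trans hpz)
  refine ⟨p, ⟨_, smul_sub_mem_subdiff_of_forall_add_sq_le hbot hconv hp hfp⟩, ?_⟩
  have hq : κ / 2 * ‖p - z‖ ^ 2 ≤ r :=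
    EReal.coe_le_coe_iff.1 ((le_add_of_nonneg_left (hnn p)).trans hpz)
  have hsq : ‖p - z‖ ^ 2 < ε ^ 2 := by
    have : κ / 2 = (r + 1) / ε ^ 2 := by ring
    rw [this, div_mul_eq_mul_div, div_le_iff₀ (by positivity)] at hq
    nlinarith
  rw [dist_eq_norm, norm_sub_rev]
  exact lt_of_pow_lt_pow_left₀ 2 hε.le hsq

theorem exists_linearMap_starProjection_mem_graph {E : Type*} [NormedAddCommGroup E]
    [InnerProductSpace ℝ E] {G : Submodule ℝ (E × E)} {S : Submodule ℝ E}
    [S.HasOrthogonalProjection] (hS : G.map (LinearMap.fst ℝ E E) = S)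
    (hG : ∀ v ∈ Sᗮ, ((0 : E), v) ∈ G) :
    ∃ M : E →ₗ[ℝ] E, ∀ x, (S.starProjection x, M x) ∈ G ∧ M x ∈ S := by
  let π : G →ₗ[ℝ] S := (LinearMap.fst ℝ E E ∘ₗ G.subtype).codRestrict S fun g =>
    hS ▸ Submodule.mem_map_of_mem g.2
  have hπ : Function.Surjective π := by
    rintro ⟨s, hs⟩
    rw [← hS] at hs
    obtain ⟨g, hg, rfl⟩ := hs
    exact ⟨⟨g, hg⟩, rfl⟩
  obtain ⟨σ, hσ⟩ := π.exists_rightInverse_of_surjective (LinearMap.range_eq_top.2 hπ)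
  have hσG (s : S) : ((s : E), (σ s : E × E).2) ∈ G := by
    have hs : (σ s : E × E).1 = s := congrArg Subtype.val (LinearMap.congr_fun hσ s)
    simpa only [← hs] using (σ s).2
  refine ⟨S.starProjection.toLinearMap ∘ₗ LinearMap.snd ℝ E E ∘ₗ G.subtype ∘ₗ σ ∘ₗ
    S.orthogonalProjectionOnto.toLinearMap, fun x => ⟨?_, Submodule.starProjection_apply_mem _ _⟩⟩
  set w := (σ (S.orthogonalProjectionOnto x) : E × E).2
  have h := G.sub_mem (hσG (S.orthogonalProjectionOnto x))
    (hG _ (Submodule.sub_starProjection_mem_orthogonal w))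
  convert h using 1
  exact Prod.ext (sub_zero _).symm (sub_sub_cancel _ _).symm

theorem statement0_general {n : ℕ} (f : EuclideanSpace ℝ (Fin n) → EReal)
    (hlsc : LowerSemicontinuous f) (hconv : ConvexFn f)
    (h0 : f 0 = 0)
    (hlin : ∃ G : Submodule ℝ (EuclideanSpace ℝ (Fin n) × EuclideanSpace ℝ (Fin n)),
      (G : Set (EuclideanSpace ℝ (Fin n) × EuclideanSpace ℝ (Fin n))) =
        {p | p.2 ∈ Subdiff f p.1}) :
    ∃ S : Submodule ℝ (EuclideanSpace ℝ (Fin n)),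
      (S : Set (EuclideanSpace ℝ (Fin n))) = {x | (Subdiff f x).Nonempty} ∧
      ((Sᗮ : Submodule ℝ (EuclideanSpace ℝ (Fin n))) : Set (EuclideanSpace ℝ (Fin n))) =
        Subdiff f 0 ∧
      ∃ M : EuclideanSpace ℝ (Fin n) →ₗ[ℝ] EuclideanSpace ℝ (Fin n),
        (∀ x y, ⟪M x, y⟫ = ⟪x, M y⟫) ∧
        (∀ x, 0 ≤ ⟪M x, x⟫) ∧
        (∀ x, M x ∈ S) ∧
        (∀ x, f x = if x ∈ S then (((1 / 2 : ℝ) * ⟪M x, x⟫ : ℝ) : EReal) else ⊤) := by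
  obtain ⟨G, hG⟩ := hlin
  have hmem (x v) : (x, v) ∈ G ↔ v ∈ Subdiff f x := Set.ext_iff.1 hG (x, v)
  have hnn := nonneg_of_zero_mem_subdiff_zero h0 ((hmem 0 0).1 G.zero_mem)
  set S := G.map (LinearMap.fst ℝ _ _)
  have hS : (S : Set (EuclideanSpace ℝ (Fin n))) = {x | (Subdiff f x).Nonempty} := by
    ext x
    simp [S, hmem, Set.Nonempty]
  have hdom (z) (hz : f z ≠ ⊤) : z ∈ S := S.closed_of_finiteDimensional.closure_subset_iff.2
    hS.ge (mem_closure_setOf_subdiff_nonempty hlsc hconv hnn hz)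
  have horth : (Sᗮ : Set (EuclideanSpace ℝ (Fin n))) = Subdiff f 0 :=
    (orthogonal_subset_subdiff_zero h0 hnn hdom).antisymm
      (subdiff_zero_subset_orthogonal_map_fst h0 hmem)
  obtain ⟨M, hM⟩ := exists_linearMap_starProjection_mem_graph (S := S) rfl fun v hv =>
    (hmem 0 v).2 (horth ▸ hv)
  have hMP (x y) : ⟪M x, y⟫ = ⟪M x, S.starProjection y⟫ := by
    rw [← Submodule.inner_starProjection_left_eq_right, S.starProjection_eq_self_iff.2 (hM x).2]
  refine ⟨S, hS, horth, M, fun x y => ?_, fun x => ?_, fun x => (hM x).2, fun x => ?_⟩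
  · rw [hMP, real_inner_comm (M y), hMP y x]
    exact inner_eq_of_mem_graph h0 hmem (hM x).1 (hM y).1
  · rw [hMP]
    exact inner_nonneg_of_mem_graph h0 hmem (hM x).1
  · split_ifs with hx
    · have hxM := (hM x).1
      rw [S.starProjection_eq_self_iff.2 hx] at hxM
      rw [eq_half_inner_of_mem_graph h0 hmem hxM, one_div_mul_eq_div]
    · by_contra hfx
      exact hx (hdom x hfx)

theorem statement0 {n : ℕ} (f : EuclideanSpace ℝ (Fin n) → EReal)
    (hproper : ProperFn f) (hlsc : LowerSemicontinuous f) (hconv : ConvexFn f)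
    (h0 : f 0 = 0)
    (hlin : ∃ G : Submodule ℝ (EuclideanSpace ℝ (Fin n) × EuclideanSpace ℝ (Fin n)),
      (G : Set (EuclideanSpace ℝ (Fin n) × EuclideanSpace ℝ (Fin n))) =
        {p | p.2 ∈ Subdiff f p.1}) :
    ∃ S : Submodule ℝ (EuclideanSpace ℝ (Fin n)),
      (S : Set (EuclideanSpace ℝ (Fin n))) = {x | (Subdiff f x).Nonempty} ∧
      ((Sᗮ : Submodule ℝ (EuclideanSpace ℝ (Fin n))) : Set (EuclideanSpace ℝ (Fin n))) =
        Subdiff f 0 ∧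
      ∃ M : EuclideanSpace ℝ (Fin n) →ₗ[ℝ] EuclideanSpace ℝ (Fin n),
        (∀ x y, ⟪M x, y⟫ = ⟪x, M y⟫) ∧
        (∀ x, 0 ≤ ⟪M x, x⟫) ∧
        (∀ x, M x ∈ S) ∧
        (∀ x, f x = if x ∈ S then (((1 / 2 : ℝ) * ⟪M x, x⟫ : ℝ) : EReal) else ⊤) :=
  statement0_general f hlsc hconv h0 hlin

end
end

section
/- Let θ : ℝⁿ → ℝ ∪ {+∞} be a polyhedral convex function with representation θ = θ₁ + θ₂ where θ₁(x) = max_{1≤ν≤p}(⟨aᵛ, x⟩ − c_ν) and θ₂ = δ_{dom θ} with dom θ = {x : ⟨bᵘ, x⟩ − d_μ ≤ 0 for all μ}. Assume y ∈ ri ∂θ(x). Then the critical cone satisfies C_θ(x, y) = {w ∈ ℝⁿ : ⟨w, aᵛ' − aᵛ⟩ = 0 for all ν, ν' ∈ ι₁(x) and ⟨w, bᵘ⟩ = 0 for all μ ∈ ι₂(x)}, where ι₁(x) is the set of active affine pieces of θ₁ at x and ι₂(x) is the set of active constraints of dom θ at x. In particular C_θ(x, y) is a linear subspace equal to the orthogonal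 complement of the subspace parallel to the affine hull of ∂θ(x). -/
/- STATEMENT 5: for a polyhedral θ = max-affine + indicator of polyhedron, and
y ∈ ri ∂θ(x), the critical cone C_θ(x,y) = N_{∂θ(x)}(y) equals the set of w
orthogonal to the differences of active max-affine gradients and to the active
constraint normals; it is the orthogonal complement of the subspace parallel to
aff ∂θ(x). -/

open scoped RealInnerProductSpace Pointwise
open Filter Topology Classical

noncomputable section

variable {n : ℕ}

/-- Normal cone (convex analysis) to a set `S` at `y`. -/
def NormalConeAt (S : Set (EuclideanSpace ℝ (Fin n))) (y : EuclideanSpace ℝ (Fin n)) :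
    Set (EuclideanSpace ℝ (Fin n)) :=
  {w | ∀ z ∈ S, ⟪w, z - y⟫ ≤ 0}

/-- Auxiliary: membership in the orthogonal complement of a span via orthogonality
to the generators. -/
lemma mem_orth_of_forall {T : Set (EuclideanSpace ℝ (Fin n))} {w : EuclideanSpace ℝ (Fin n)}
    (h : ∀ u ∈ T, ⟪u, w⟫ = 0) : w ∈ (Submodule.span ℝ T)ᗮ := by
  rw [Submodule.mem_orthogonal]
  intro u hu
  induction hu using Submodule.span_induction with
  | mem u hu => exact h u hu
  | zero => simp
  | add u v _ _ hu hv => rw [inner_add_left, hu, hv]; ring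
  | smul r u _ hu => rw [real_inner_smul_left, hu]; ring

/-- Auxiliary eventual bound near 0 from the right. -/
lemma aux_ev {cc dv : ℝ} (e : ℝ) (h : cc < dv) :
    ∀ᶠ t in 𝓝[>] (0:ℝ), cc + t * e ≤ dv := by
  have hcont : Filter.Tendsto (fun t : ℝ => cc + t * e) (𝓝 0) (𝓝 cc) := by
    have hc : Continuous fun t : ℝ => cc + t * e := by fun_prop
    simpa using hc.tendsto 0
  have h2 := Filter.Tendsto.eventually_lt_const h hcont
  exact eventually_nhdsWithin_of_eventually_nhds (h2.mono fun t ht => ht.le)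

/-- The normal cone at a point of the intrinsic interior is the orthogonal
complement of the difference span. -/
lemma normalConeAt_eq_orth {S : Set (EuclideanSpace ℝ (Fin n))} {y : EuclideanSpace ℝ (Fin n)}
    (hy : y ∈ intrinsicInterior ℝ S) :
    NormalConeAt S y =
      (((Submodule.span ℝ (S - S))ᗮ : Submodule ℝ (EuclideanSpace ℝ (Fin n))) :
        Set (EuclideanSpace ℝ (Fin n))) := by
  have hyS : y ∈ S := intrinsicInterior_subset hy
  ext w
  simp only [NormalConeAt, Set.mem_setOf_eq, SetLike.mem_coe]
  constructor
  · intro hw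
    have key : ∀ z ∈ S, ⟪w, z - y⟫ = 0 := by
      intro z hz
      refine le_antisymm (hw z hz) ?_
      obtain ⟨y', hy', hyy⟩ := hy
      have hz' : z ∈ affineSpan ℝ S := subset_affineSpan ℝ S hz
      have hline : ∀ t : ℝ,
          t • ((y' : EuclideanSpace ℝ (Fin n)) - z) + (y' : EuclideanSpace ℝ (Fin n)) ∈
            affineSpan ℝ S := by
        intro t
        simpa [vsub_eq_sub, vadd_eq_add] using
          AffineSubspace.smul_vsub_vadd_mem (affineSpan ℝ S) t y'.2 hz' y'.2
      set γ : ℝ → (affineSpan ℝ S) := fun t => ⟨_, hline t⟩ with hγdef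
      have hγ : Continuous γ := by
        refine Continuous.subtype_mk ?_ _
        fun_prop
      have hopen : IsOpen (γ ⁻¹' interior (((↑) : affineSpan ℝ S → _) ⁻¹' S)) :=
        isOpen_interior.preimage hγ
      have h0 : (0:ℝ) ∈ γ ⁻¹' interior (((↑) : affineSpan ℝ S → _) ⁻¹' S) := by
        have hγ0 : γ 0 = y' := Subtype.ext (by simp [hγdef])
        simp only [Set.mem_preimage]
        rw [hγ0]; exact hy'
      obtain ⟨ε, hε, hball⟩ := Metric.isOpen_iff.mp hopen 0 h0
      have htU : (ε/2) ∈ γ ⁻¹' interior (((↑) : affineSpan ℝ S → _) ⁻¹' S) := by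
        apply hball
        simp only [Metric.mem_ball, Real.dist_eq, sub_zero]
        rw [abs_of_pos (by linarith)]
        linarith
      have h6 : γ (ε/2) ∈ interior (((↑) : affineSpan ℝ S → _) ⁻¹' S) :=
        Set.mem_preimage.mp htU
      have hmem : (ε/2) • ((y' : EuclideanSpace ℝ (Fin n)) - z) +
          (y' : EuclideanSpace ℝ (Fin n)) ∈ S := by
        have h7 := interior_subset h6
        rw [hγdef] at h7
        simpa using h7
      rw [hyy] at hmem
      have h2 := hw _ hmem
      have h3 : ⟪w, ((ε/2) • (y - z) + y) - y⟫ = (ε/2) * ⟪w, y - z⟫ := by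
        rw [add_sub_cancel_right, real_inner_smul_right]
      rw [h3] at h2
      have h4 : ⟪w, y - z⟫ ≤ 0 := by nlinarith
      have h5 : ⟪w, z - y⟫ = - ⟪w, y - z⟫ := by
        rw [← neg_sub y z, inner_neg_right]
      rw [h5]; linarith
    apply mem_orth_of_forall
    rintro u hu
    obtain ⟨s1, hs1, s2, hs2, rfl⟩ := Set.mem_sub.mp hu
    have h1 : ⟪w, s1 - s2⟫ = ⟪w, s1 - y⟫ - ⟪w, s2 - y⟫ := by
      rw [← inner_sub_right]
      congr 1
      abel
    rw [real_inner_comm, h1, key s1 hs1, key s2 hs2, sub_self]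
  · intro hw z hz
    have hu : z - y ∈ S - S := Set.sub_mem_sub hz hyS
    have h0 := (Submodule.mem_orthogonal _ _).mp hw _ (Submodule.subset_span hu)
    rw [real_inner_comm] at h0
    exact le_of_eq h0

theorem statement5 {n p q : ℕ} [Nonempty (Fin p)]
    (a : Fin p → EuclideanSpace ℝ (Fin n)) (c : Fin p → ℝ)
    (b : Fin q → EuclideanSpace ℝ (Fin n)) (d : Fin q → ℝ)
    (θ : EuclideanSpace ℝ (Fin n) → EReal)
    (hθ : ∀ x, θ x =
      if ∀ μ, ⟪b μ, x⟫ ≤ d μ then (((⨆ ν, (⟪a ν, x⟫ - c ν)) : ℝ) : EReal) else ⊤)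
    (x y : EuclideanSpace ℝ (Fin n))
    (hx : ∀ μ, ⟪b μ, x⟫ ≤ d μ)
    (hy : y ∈ intrinsicInterior ℝ (Subdiff θ x)) :
    NormalConeAt (Subdiff θ x) y =
      {w | (∀ ν ν' : Fin p,
              (⟪a ν, x⟫ - c ν = ⨆ ν'', (⟪a ν'', x⟫ - c ν'')) →
              (⟪a ν', x⟫ - c ν' = ⨆ ν'', (⟪a ν'', x⟫ - c ν'')) →
              ⟪w, a ν' - a ν⟫ = 0) ∧
            ∀ μ : Fin q, ⟪b μ, x⟫ = d μ → ⟪w, b μ⟫ = 0} ∧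
    (∃ W : Submodule ℝ (EuclideanSpace ℝ (Fin n)),
      (W : Set (EuclideanSpace ℝ (Fin n))) = NormalConeAt (Subdiff θ x) y) ∧
    NormalConeAt (Subdiff θ x) y =
      (((Submodule.span ℝ (Subdiff θ x - Subdiff θ x))ᗮ : Submodule ℝ (EuclideanSpace ℝ (Fin n))) :
        Set (EuclideanSpace ℝ (Fin n))) := by
  classical
  have hbdd : ∀ z : EuclideanSpace ℝ (Fin n),
      BddAbove (Set.range fun ν => ⟪a ν, z⟫ - c ν) :=
    fun z => (Set.finite_range _).bddAbove
  -- abbreviation for the max function value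
  let M : EuclideanSpace ℝ (Fin n) → ℝ := fun z => ⨆ ν, (⟪a ν, z⟫ - c ν)
  have hMdef : ∀ z, M z = ⨆ ν, (⟪a ν, z⟫ - c ν) := fun z => rfl
  -- membership characterization of the subdifferential
  have hSmem : ∀ s, s ∈ Subdiff θ x ↔
      ∀ z, (∀ μ, ⟪b μ, z⟫ ≤ d μ) → ⟪s, z - x⟫ + M x ≤ M z := by
    intro s
    constructor
    · intro hs z hzfeas
      have h1 := hs z
      rw [hθ x, hθ z, if_pos hx, if_pos hzfeas, ← EReal.coe_add, EReal.coe_le_coe_iff] at h1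
      linarith
    · intro h z
      rw [hθ x, hθ z, if_pos hx]
      split_ifs with hz
      · rw [← EReal.coe_add, EReal.coe_le_coe_iff]
        linarith [h z hz]
      · exact le_top
  -- an active index for the max
  obtain ⟨ν₀, hν₀max⟩ := Finite.exists_max fun ν => ⟪a ν, x⟫ - c ν
  have hν₀ : ⟪a ν₀, x⟫ - c ν₀ = M x :=
    le_antisymm (le_ciSup (hbdd x) ν₀) (ciSup_le hν₀max)
  -- active max gradients are subgradients
  have hmemA : ∀ ν, (⟪a ν, x⟫ - c ν = M x) → a ν ∈ Subdiff θ x := by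
    intro ν hν
    rw [hSmem]
    intro z hz
    have h1 : ⟪a ν, z - x⟫ = (⟪a ν, z⟫ - c ν) - (⟪a ν, x⟫ - c ν) := by
      rw [inner_sub_right]; ring
    have h2 : ⟪a ν, z⟫ - c ν ≤ M z := le_ciSup (hbdd z) ν
    rw [h1, hν]; linarith
  -- active constraint normals shifted by an active gradient are subgradients
  have hmemAB : ∀ μ, (⟪b μ, x⟫ = d μ) → a ν₀ + b μ ∈ Subdiff θ x := by
    intro μ hμ
    rw [hSmem]
    intro z hz
    have h1 : ⟪a ν₀ + b μ, z - x⟫ = ⟪a ν₀, z - x⟫ + (⟪b μ, z⟫ - ⟪b μ, x⟫) := by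
      simp only [inner_add_left, inner_sub_right]; ring
    have h2 : ⟪a ν₀, z - x⟫ = (⟪a ν₀, z⟫ - c ν₀) - (⟪a ν₀, x⟫ - c ν₀) := by
      rw [inner_sub_right]; ring
    have h3 : ⟪a ν₀, z⟫ - c ν₀ ≤ M z := le_ciSup (hbdd z) ν₀
    have h4 := hz μ
    rw [h1, h2, hν₀]
    linarith
  -- key claim: if w satisfies the orthogonality conditions, then ⟪s, w⟫ is
  -- constant over the subdifferential
  have hkey : ∀ w : EuclideanSpace ℝ (Fin n),
      (∀ ν ν' : Fin p, (⟪a ν, x⟫ - c ν = M x) → (⟪a ν', x⟫ - c ν' = M x) →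
        ⟪w, a ν' - a ν⟫ = 0) →
      (∀ μ, ⟪b μ, x⟫ = d μ → ⟪w, b μ⟫ = 0) →
      ∀ s ∈ Subdiff θ x, ⟪s, w⟫ = ⟪a ν₀, w⟫ := by
    intro w hw1 hw2 s hs
    set α := ⟪a ν₀, w⟫ with hα
    have hb : ∀ μ, ∀ᶠ t in 𝓝[>] (0:ℝ),
        ⟪b μ, x⟫ + t * ⟪b μ, w⟫ ≤ d μ ∧ ⟪b μ, x⟫ + t * (-⟪b μ, w⟫) ≤ d μ := by
      intro μ
      rcases eq_or_lt_of_le (hx μ) with heq | hlt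
      · have h0 : ⟪w, b μ⟫ = 0 := hw2 μ heq
        have h0' : ⟪b μ, w⟫ = 0 := by rw [real_inner_comm]; exact h0
        exact Filter.Eventually.of_forall fun t => by
          rw [h0']
          simp only [neg_zero, mul_zero, add_zero]
          exact ⟨heq.le, heq.le⟩
      · exact (aux_ev _ hlt).and (aux_ev _ hlt)
    have hA : ∀ ν, ∀ᶠ t in 𝓝[>] (0:ℝ),
        (⟪a ν, x⟫ - c ν) + t * (⟪a ν, w⟫ - α) ≤ M x ∧
        (⟪a ν, x⟫ - c ν) + t * (α - ⟪a ν, w⟫) ≤ M x := by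
      intro ν
      rcases eq_or_lt_of_le (le_ciSup (hbdd x) ν : ⟪a ν, x⟫ - c ν ≤ M x) with heq | hlt
      · have h0 : ⟪w, a ν - a ν₀⟫ = 0 := hw1 ν₀ ν hν₀ heq
        rw [inner_sub_right] at h0
        have he : ⟪a ν, w⟫ = α := by
          have c1 : ⟪a ν, w⟫ = ⟪w, a ν⟫ := real_inner_comm _ _
          have c2 : ⟪a ν₀, w⟫ = ⟪w, a ν₀⟫ := real_inner_comm _ _
          rw [hα]
          linarith
        exact Filter.Eventually.of_forall fun t => by
          rw [he]
          simp only [sub_self, mul_zero, add_zero]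
          exact ⟨heq.le, heq.le⟩
      · exact (aux_ev _ hlt).and (aux_ev _ hlt)
    have hall := ((eventually_all.mpr hb).and (eventually_all.mpr hA)).and
      eventually_mem_nhdsWithin
    obtain ⟨t, ⟨⟨htb, hta⟩, htpos⟩⟩ := hall.exists
    have ht0 : (0:ℝ) < t := htpos
    -- feasibility of x ± t • w
    have hfeasP : ∀ μ, ⟪b μ, x + t • w⟫ ≤ d μ := by
      intro μ
      have := (htb μ).1
      rwa [inner_add_right, real_inner_smul_right]
    have hfeasM : ∀ μ, ⟪b μ, x - t • w⟫ ≤ d μ := by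
      intro μ
      have := (htb μ).2
      rw [inner_sub_right, real_inner_smul_right]
      linarith
    -- max function bounds at x ± t • w
    have hMP : M (x + t • w) ≤ M x + t * α := by
      rw [hMdef]
      refine ciSup_le fun ν => ?_
      have := (hta ν).1
      rw [inner_add_right, real_inner_smul_right]
      linarith
    have hMM : M (x - t • w) ≤ M x - t * α := by
      rw [hMdef]
      refine ciSup_le fun ν => ?_
      have := (hta ν).2
      rw [inner_sub_right, real_inner_smul_right]
      linarith
    have hsubP := (hSmem s).mp hs (x + t • w) hfeasP
    have hsubM := (hSmem s).mp hs (x - t • w) hfeasM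
    rw [add_sub_cancel_left, real_inner_smul_right] at hsubP
    rw [sub_sub_cancel_left, inner_neg_right, real_inner_smul_right] at hsubM
    have hineq1 : ⟪s, w⟫ ≤ α := by nlinarith
    have hineq2 : α ≤ ⟪s, w⟫ := by nlinarith
    linarith
  -- the explicit set equals the orthogonal complement
  have hEq : {w : EuclideanSpace ℝ (Fin n) |
        (∀ ν ν' : Fin p, (⟪a ν, x⟫ - c ν = M x) → (⟪a ν', x⟫ - c ν' = M x) →
          ⟪w, a ν' - a ν⟫ = 0) ∧
        ∀ μ : Fin q, ⟪b μ, x⟫ = d μ → ⟪w, b μ⟫ = 0} =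
      (((Submodule.span ℝ (Subdiff θ x - Subdiff θ x))ᗮ :
          Submodule ℝ (EuclideanSpace ℝ (Fin n))) :
        Set (EuclideanSpace ℝ (Fin n))) := by
    ext w
    simp only [Set.mem_setOf_eq, SetLike.mem_coe]
    constructor
    · rintro ⟨hw1, hw2⟩
      apply mem_orth_of_forall
      rintro u hu
      obtain ⟨s1, hs1, s2, hs2, rfl⟩ := Set.mem_sub.mp hu
      rw [inner_sub_left, hkey w hw1 hw2 s1 hs1, hkey w hw1 hw2 s2 hs2, sub_self]
    · intro hw
      have horth : ∀ u ∈ Subdiff θ x - Subdiff θ x, ⟪w, u⟫ = 0 := by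
        intro u hu
        have := (Submodule.mem_orthogonal _ _).mp hw _ (Submodule.subset_span hu)
        rwa [real_inner_comm] at this
      constructor
      · intro ν ν' hν hν'
        exact horth _ (Set.sub_mem_sub (hmemA ν' hν') (hmemA ν hν))
      · intro μ hμ
        have h1 := horth _ (Set.sub_mem_sub (hmemAB μ hμ) (hmemA ν₀ hν₀))
        rwa [add_sub_cancel_left] at h1
  have hA' := normalConeAt_eq_orth hy
  exact ⟨hA'.trans hEq.symm, ⟨(Submodule.span ℝ (Subdiff θ x - Subdiff θ x))ᗮ, hA'.symm⟩, hA'⟩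

end
end

section
/- Let X, Y ∈ Sⁿ and P be an orthogonal matrix simultaneously diagonalizing X and Y with eigenvalues in nonincreasing order (P ∈ Oⁿ(X) ∩ Oⁿ(Y)). Fix a block α of indices on which λ(X) is constant, and partition α into consecutive blocks γ₁, …, γ_u on which λ(Y) is constant, with strictly decreasing values across blocks. For H ∈ Sⁿ, the following are equivalent: (i) the matrices Λ(Y)_{αα} and (PᵀHP)_{αα} have a simultaneous ordered spectral decomposition; (ii) (PᵀHP)_{αα} is block diagonal with blocks (PᵀHP)_{γⱼγⱼ}, each block diagonalizable by an orthogonal matrix with the eigenvalues of (PᵀHP)_{αα} arranged so that every eigenvalue appearing in block γ_s is at least every eigenvalue appearing in block γ_{s'} whenever s < s'. -/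
/- STATEMENT 9: for a diagonal matrix Diag(d) with d nonincreasing, constant on
blocks (given by a monotone block map blk with strictly decreasing values across
blocks) and a symmetric B, the pair (Diag(d), B) has a simultaneous ordered
spectral decomposition iff B is block diagonal w.r.t. blk and admits a
block-diagonal orthogonal diagonalization by its ordered eigenvalues, with the
eigenvalues appearing in earlier blocks at least those in later blocks.
(Here Diag(d) plays the role of Λ(Y)_{αα} and B of (PᵀHP)_{αα}.) -/

open Classical Matrix

noncomputable section

abbrev Mat (n : ℕ) := Matrix (Fin n) (Fin n) ℝ

/-- Eigenvalues in nonincreasing order (junk value if not symmetric). -/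
noncomputable def eigs {m : ℕ} (A : Mat m) : Fin m → ℝ :=
  if h : A.IsHermitian then (fun i => h.eigenvalues (Tuple.sort h.eigenvalues i.rev)) else 0

/-- Simultaneous ordered spectral decomposition of two symmetric matrices. -/
def SimOrdSpec {m : ℕ} (A B : Mat m) : Prop :=
  ∃ Q : Mat m, Q * Qᵀ = 1 ∧
    A = Q * Matrix.diagonal (eigs A) * Qᵀ ∧
    B = Q * Matrix.diagonal (eigs B) * Qᵀ

/-! Since `d` is already sorted, `eigs (diagonal d) = d`, so a simultaneous ordered decomposition
is an orthogonal `Q` with `diagonal d = Q * diagonal d * Qᵀ` that diagonalises `B`. That equation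
says `Q` commutes with `diagonal d`, i.e. `Q` is block diagonal for the level sets of `d`, and these
are the blocks of `blk`; then `B = Q * diagonal (eigs B) * Qᵀ` is block diagonal as well. The order
across blocks is automatic: `eigs B` is nonincreasing and `blk` is monotone. -/

open Polynomial

theorem Antitone.eq_of_map_univ_eq {α : Type*} [LinearOrder α] {m : ℕ} {f g : Fin m → α}
    (hf : Antitone f) (hg : Antitone g)
    (h : Finset.univ.val.map f = Finset.univ.val.map g) : f = g := by
  have hperm : (List.ofFn f).Perm (List.ofFn g) := by
    rw [← Multiset.coe_eq_coe]
    simpa [Fin.univ_val_map] using h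
  exact List.ofFn_injective <|
    hperm.eq_of_sortedGE (List.sortedGE_ofFn_iff.2 hf) (List.sortedGE_ofFn_iff.2 hg)

theorem eigs_antitone {m : ℕ} (A : Mat m) : Antitone (eigs A) := by
  unfold eigs
  split
  next hA => exact fun i j hij => Tuple.monotone_sort hA.eigenvalues (Fin.rev_le_rev.2 hij)
  next => exact antitone_const

theorem roots_charpoly_eq_map_eigs {m : ℕ} {A : Mat m} (hA : A.IsHermitian) :
    A.charpoly.roots = Finset.univ.val.map (eigs A) := by
  have hsort : Finset.univ.val.map (eigs A) = Finset.univ.val.map hA.eigenvalues := by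
    rw [eigs, dif_pos hA]
    change Finset.univ.val.map (hA.eigenvalues ∘ (Fin.revPerm.trans (Tuple.sort _))) = _
    rw [← Multiset.map_map, Multiset.map_univ_val_equiv]
  rw [hsort, hA.roots_charpoly_eq_eigenvalues]
  rfl

theorem eigs_diagonal {m : ℕ} {d : Fin m → ℝ} (hd : Antitone d) :
    eigs (diagonal d) = d := by
  refine (eigs_antitone _).eq_of_map_univ_eq hd ?_
  rw [← roots_charpoly_eq_map_eigs (isHermitian_diagonal d), charpoly_diagonal,
    roots_prod _ _ (Finset.prod_ne_zero_iff.2 fun i _ => X_sub_C_ne_zero (d i))]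
  simp

namespace Matrix

variable {n β R : Type*}

def IsBlockDiagonal [Zero R] (blk : n → β) (M : Matrix n n R) : Prop :=
  ∀ i j, blk i ≠ blk j → M i j = 0

theorem isBlockDiagonal_congr [Zero R] {β' : Type*} {blk : n → β} {blk' : n → β'}
    (h : ∀ i j, blk i = blk j ↔ blk' i = blk' j) (M : Matrix n n R) :
    IsBlockDiagonal blk M ↔ IsBlockDiagonal blk' M := by
  simp only [IsBlockDiagonal, ne_eq, h]

theorem isBlockDiagonal_diagonal [Zero R] [DecidableEq n] (blk : n → β) (d : n → R) :
    IsBlockDiagonal blk (diagonal d) :=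
  fun _ _ h => diagonal_apply_ne _ fun hij => h (congrArg blk hij)

theorem IsBlockDiagonal.transpose [Zero R] {blk : n → β} {M : Matrix n n R}
    (hM : IsBlockDiagonal blk M) : IsBlockDiagonal blk Mᵀ :=
  fun i j h => hM j i (Ne.symm h)

theorem IsBlockDiagonal.mul [Fintype n] [NonUnitalNonAssocSemiring R] {blk : n → β}
    {M N : Matrix n n R} (hM : IsBlockDiagonal blk M) (hN : IsBlockDiagonal blk N) :
    IsBlockDiagonal blk (M * N) := by
  intro i j h
  rw [mul_apply]
  refine Finset.sum_eq_zero fun k _ => ?_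
  by_cases hk : blk i = blk k
  · rw [hN k j (hk ▸ h), mul_zero]
  · rw [hM i k hk, zero_mul]

theorem commute_diagonal_iff_isBlockDiagonal [Fintype n] [DecidableEq n] [CommRing R]
    [NoZeroDivisors R] {d : n → R} {M : Matrix n n R} :
    Commute (diagonal d) M ↔ IsBlockDiagonal d M := by
  have hentry : ∀ i j, (diagonal d * M) i j = (M * diagonal d) i j ↔ d i = d j ∨ M i j = 0 := by
    intro i j
    rw [diagonal_mul, mul_diagonal, mul_comm, ← sub_eq_zero, ← mul_sub, mul_eq_zero, sub_eq_zero,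
      or_comm, eq_comm]
  simp only [Commute, SemiconjBy, ← Matrix.ext_iff, hentry, IsBlockDiagonal, or_iff_not_imp_left]

theorem eq_mul_mul_transpose_iff_commute [Fintype n] [DecidableEq n] [CommRing R]
    {A Q : Matrix n n R} (hQ : Q * Qᵀ = 1) : A = Q * A * Qᵀ ↔ Commute A Q := by
  have hQ' : Qᵀ * Q = 1 := mul_eq_one_comm.mp hQ
  constructor
  · intro h
    calc A * Q = Q * A * (Qᵀ * Q) := by rw [← mul_assoc, ← h]
      _ = Q * A := by rw [hQ', mul_one]
  · intro h
    rw [← h.eq, mul_assoc, hQ, mul_one]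

end Matrix

theorem statement9_general {m u : ℕ} (d : Fin m → ℝ) (hd : Antitone d)
    (blk : Fin m → Fin u) (hblk : Monotone blk)
    (hconst : ∀ i j, blk i = blk j → d i = d j)
    (hstrict : ∀ i j, blk i < blk j → d j < d i)
    (B : Mat m) :
    SimOrdSpec (Matrix.diagonal d) B ↔
      ((∀ i j, blk i ≠ blk j → B i j = 0) ∧
        (∃ Q : Mat m, Q * Qᵀ = 1 ∧ (∀ i j, blk i ≠ blk j → Q i j = 0) ∧
          B = Q * Matrix.diagonal (eigs B) * Qᵀ) ∧
        (∀ i j, blk i < blk j → eigs B j ≤ eigs B i)) := by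
  have hlevels : ∀ i j, d i = d j ↔ blk i = blk j := by
    refine fun i j => ⟨fun h => ?_, hconst i j⟩
    by_contra hne
    rcases lt_or_gt_of_ne hne with hlt | hlt
    · exact (hstrict i j hlt).ne' h
    · exact (hstrict j i hlt).ne h
  have hcommute : ∀ Q : Mat m, Commute (diagonal d) Q ↔ IsBlockDiagonal blk Q := fun Q =>
    commute_diagonal_iff_isBlockDiagonal.trans (isBlockDiagonal_congr hlevels Q)
  have heigs_blocks : ∀ i j, blk i < blk j → eigs B j ≤ eigs B i :=
    fun i j h => eigs_antitone B (hblk.reflect_lt h).le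
  rw [SimOrdSpec, eigs_diagonal hd]
  constructor
  · rintro ⟨Q, hQ, hdQ, hBQ⟩
    have hQblk : IsBlockDiagonal blk Q :=
      (hcommute Q).1 ((eq_mul_mul_transpose_iff_commute hQ).1 hdQ)
    refine ⟨?_, ⟨Q, hQ, hQblk, hBQ⟩, heigs_blocks⟩
    rw [hBQ]
    exact (hQblk.mul (isBlockDiagonal_diagonal blk _)).mul hQblk.transpose
  · rintro ⟨-, ⟨Q, hQ, hQblk, hBQ⟩, -⟩
    exact ⟨Q, hQ, (eq_mul_mul_transpose_iff_commute hQ).2 ((hcommute Q).2 hQblk), hBQ⟩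

theorem statement9 {m u : ℕ} (d : Fin m → ℝ) (hd : Antitone d)
    (blk : Fin m → Fin u) (hblk : Monotone blk)
    (hconst : ∀ i j, blk i = blk j → d i = d j)
    (hstrict : ∀ i j, blk i < blk j → d j < d i)
    (B : Mat m) (hB : B.IsHermitian) :
    SimOrdSpec (Matrix.diagonal d) B ↔
      ((∀ i j, blk i ≠ blk j → B i j = 0) ∧
        (∃ Q : Mat m, Q * Qᵀ = 1 ∧ (∀ i j, blk i ≠ blk j → Q i j = 0) ∧
          B = Q * Matrix.diagonal (eigs B) * Qᵀ) ∧
        (∀ i j, blk i < blk j → eigs B j ≤ eigs B i)) :=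
  statement9_general d hd blk hblk hconst hstrict B

end
end

section
/- Let (X, Y) ∈ gph N_{S₊ⁿ} (i.e., X ⪰ 0, Y ⪯ 0, ⟨X, Y⟩ = 0), and let P be an orthogonal matrix diagonalizing X + Y with eigenvalues in nonincreasing order; set α = {i : λ_i(X+Y) > 0}, β = {i : λ_i(X+Y) = 0}, γ = {i : λ_i(X+Y) < 0}. Then the affine hull of the critical cone of the indicator δ_{S₊ⁿ} at X for Y is aff C_{S₊ⁿ}(X, Y) = {H ∈ Sⁿ : P_βᵀ H P_γ = 0 and P_γᵀ H P_γ = 0}. -/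
/-
Conjugating by `P` reduces everything to diagonal data. Since `X ⪰ 0 ⪰ Y` and `⟨X, Y⟩ = 0`,
in fact `XY = 0`, which forces `X = P Diag(d₊) Pᵀ` and `Y = P Diag(d₋) Pᵀ`.

For diagonal data, every tangent direction `H` has `vᵀ H v ≥ 0` for `v` supported on `β ∪ γ`,
and orthogonality to `Y` then kills the diagonal of `H_γγ`; `2 × 2` minors kill the rest of the
`(β ∪ γ) × γ` block. Conversely, `E_ij + E_ji` lies in the span of the critical cone whenever
`(i, j)` avoids that block: for `i, j ∈ α ∪ β` it is a difference of rank-one positive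
semidefinite matrices supported on `α ∪ β`, and for `i ∈ α`, `j ∈ γ` it is the limit of the
feasible directions `E_ij + E_ji + ε E_jj`.
-/

open Classical Matrix Filter Topology

noncomputable section

/-- Tangent cone (to a convex set) at a point: closure of the feasible-direction cone. -/
def TangentConeAt {n : ℕ} (S : Set (Mat n)) (x : Mat n) : Set (Mat n) :=
  closure {h | ∃ t : ℝ, 0 < t ∧ ∃ s ∈ S, h = t • (s - x)}

/-- Critical cone of δ_{S₊ⁿ} at X for Y: T_{S₊ⁿ}(X) ∩ Y⊥. -/
def CritSDP {n : ℕ} (X Y : Mat n) : Set (Mat n) :=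
  {H | H ∈ TangentConeAt {A : Mat n | A.PosSemidef} X ∧ (H * Y).trace = 0}

theorem eq_zero_of_forall_nonneg_add_mul {K : Type*} [Field K] [LinearOrder K]
    [IsStrictOrderedRing K] {a b : K} (h : ∀ c, 0 ≤ a + c * b) : b = 0 := by
  by_contra hb
  have := h (-(a + 1) / b)
  rw [div_mul_cancel₀ _ hb] at this
  linarith

namespace Matrix

theorem posSemidef_vecMulVec_self {ι : Type*} [Fintype ι] (u : ι → ℝ) :
    (vecMulVec u u).PosSemidef := by
  simpa using posSemidef_vecMulVec_self_star u

variable {ι : Type*} [Fintype ι] [DecidableEq ι]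

open scoped ComplexOrder MatrixOrder in
theorem PosSemidef.mul_eq_zero_of_trace_mul_eq_zero {𝕜 : Type*} [RCLike 𝕜]
    {A B : Matrix ι ι 𝕜} (hA : A.PosSemidef) (hB : B.PosSemidef) (h : (A * B).trace = 0) :
    A * B = 0 := by
  set a := CFC.sqrt A
  set b := CFC.sqrt B
  have ha : a * a = A := CFC.sqrt_mul_sqrt_self A hA.nonneg
  have hb : b * b = B := CFC.sqrt_mul_sqrt_self B hB.nonneg
  have hab : a * b = 0 := by
    rw [← trace_conjTranspose_mul_self_eq_zero_iff, conjTranspose_mul,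
      (CFC.sqrt_nonneg A).posSemidef.1.eq, (CFC.sqrt_nonneg B).posSemidef.1.eq,
      show b * a * (a * b) = b * ((a * a) * b) by noncomm_ring, trace_mul_comm, mul_assoc, hb,
      ha, h]
  calc A * B = a * (a * b) * b := by rw [← ha, ← hb]; noncomm_ring
    _ = 0 := by rw [hab, mul_zero, zero_mul]

theorem PosSemidef.apply_eq_zero_of_mul_self_eq_mul_diagonal {A : Matrix ι ι ℝ} {d : ι → ℝ}
    (hA : A.PosSemidef) (h : A * A = A * diagonal d) {i : ι} (hi : d i ≤ 0) (k : ι) :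
    A i k = 0 := by
  have hsq : ∑ l, A i l ^ 2 = A i i * d i := by
    rw [← mul_diagonal, ← h, mul_apply]
    exact Finset.sum_congr rfl fun l _ => by rw [sq, ← hA.1.apply l i, star_trivial]
  have hle : ∑ l, A i l ^ 2 ≤ 0 := hsq ▸ mul_nonpos_of_nonneg_of_nonpos hA.diag_nonneg hi
  exact pow_eq_zero_iff two_ne_zero |>.mp <|
    (Finset.sum_eq_zero_iff_of_nonneg fun l _ => sq_nonneg (A i l)).mp
      (le_antisymm hle (Finset.sum_nonneg fun l _ => sq_nonneg _)) k (Finset.mem_univ k)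

theorem PosSemidef.eq_diagonal_max_min {A B : Matrix ι ι ℝ} {d : ι → ℝ}
    (hA : A.PosSemidef) (hB : (-B).PosSemidef) (hAB : (A * B).trace = 0)
    (hsum : A + B = diagonal d) :
    A = diagonal (fun i => max (d i) 0) ∧ B = diagonal (fun i => min (d i) 0) := by
  have hAB' : A * B = 0 := by
    simpa using hA.mul_eq_zero_of_trace_mul_eq_zero hB (by simp [hAB])
  have hBA' : B * A = 0 := by
    simpa using hB.mul_eq_zero_of_trace_mul_eq_zero hA (by simp [trace_mul_comm B, hAB])
  have hAA : A * A = A * diagonal d := by rw [← hsum, mul_add, hAB', add_zero]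
  have hBB : -B * -B = -B * diagonal (-d) := by
    rw [show diagonal (-d) = -(A + B) by rw [hsum]; exact (diagonal_neg d).symm]
    simp [mul_add, hBA']
  have hrowA {i} (hi : d i ≤ 0) (j) : A i j = 0 :=
    hA.apply_eq_zero_of_mul_self_eq_mul_diagonal hAA hi j
  have hrowB {i} (hi : 0 ≤ d i) (j) : B i j = 0 := by
    simpa using hB.apply_eq_zero_of_mul_self_eq_mul_diagonal hBB (neg_nonpos.2 hi) j
  have hentry (i j) : A i j + B i j = diagonal d i j := by rw [← hsum, add_apply]
  constructor <;> ext i j <;> have := hentry i j <;> rcases le_total (d i) 0 with hi | hi <;>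
    simp only [diagonal_apply] at this ⊢ <;> split_ifs at this ⊢ with hij <;>
    simp_all

section OrthogonalConj

variable {P : Matrix ι ι ℝ}

def orthogonalConj (hP : Pᵀ * P = 1) : Matrix ι ι ℝ ≃L[ℝ] Matrix ι ι ℝ :=
  LinearEquiv.toContinuousLinearEquiv
    { toFun A := P * A * Pᵀ
      invFun A := Pᵀ * A * P
      map_add' A B := by simp only [mul_add, add_mul]
      map_smul' c A := by rw [Matrix.mul_smul, Matrix.smul_mul]; rfl
      left_inv A := by simp only [← mul_assoc, hP, one_mul]; rw [mul_assoc, hP, mul_one]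
      right_inv A := by
        simp only [← mul_assoc, mul_eq_one_comm.mp hP, one_mul]
        rw [mul_assoc, mul_eq_one_comm.mp hP, mul_one] }

variable (hP : Pᵀ * P = 1) (A B : Matrix ι ι ℝ)

@[simp] theorem orthogonalConj_apply : orthogonalConj hP A = P * A * Pᵀ := rfl

@[simp] theorem orthogonalConj_symm_apply : (orthogonalConj hP).symm A = Pᵀ * A * P := rfl

theorem orthogonalConj_mul :
    orthogonalConj hP A * orthogonalConj hP B = orthogonalConj hP (A * B) := by
  simp only [orthogonalConj_apply, ← mul_assoc]
  rw [mul_assoc (P * A), hP, mul_one]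

theorem trace_orthogonalConj : (orthogonalConj hP A).trace = A.trace := by
  rw [orthogonalConj_apply, trace_mul_cycle, hP, one_mul]

theorem transpose_orthogonalConj : (orthogonalConj hP A)ᵀ = orthogonalConj hP Aᵀ := by
  simp [mul_assoc]

variable {A}

theorem posSemidef_orthogonalConj_iff : (orthogonalConj hP A).PosSemidef ↔ A.PosSemidef := by
  refine ⟨fun h => ?_, fun h => ?_⟩
  · rw [← (orthogonalConj hP).symm_apply_apply A, orthogonalConj_symm_apply]
    simpa [conjTranspose_eq_transpose_of_trivial] using h.conjTranspose_mul_mul_same P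
  · simpa [conjTranspose_eq_transpose_of_trivial] using h.mul_mul_conjTranspose_same P

theorem isHermitian_orthogonalConj_iff : (orthogonalConj hP A).IsHermitian ↔ A.IsHermitian := by
  simp only [IsHermitian, conjTranspose_eq_transpose_of_trivial, transpose_orthogonalConj,
    (orthogonalConj hP).injective.eq_iff]

end OrthogonalConj

theorem PosSemidef.eq_orthogonalConj_diagonal_max_min {X Y P : Matrix ι ι ℝ} {d : ι → ℝ}
    (hP : Pᵀ * P = 1) (hX : X.PosSemidef) (hY : (-Y).PosSemidef)
    (hXY : (X * Y).trace = 0) (hdec : X + Y = orthogonalConj hP (diagonal d)) :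
    X = orthogonalConj hP (diagonal fun i => max (d i) 0) ∧
      Y = orthogonalConj hP (diagonal fun i => min (d i) 0) := by
  set e := orthogonalConj hP
  have hconj {A : Matrix ι ι ℝ} (hA : A.PosSemidef) : (e.symm A).PosSemidef := by
    rwa [← posSemidef_orthogonalConj_iff hP, e.apply_symm_apply]
  obtain ⟨hXd, hYd⟩ := PosSemidef.eq_diagonal_max_min (hconj hX) (by simpa using hconj hY)
    (by rw [← trace_orthogonalConj hP, ← orthogonalConj_mul, e.apply_symm_apply,
      e.apply_symm_apply, hXY])
    (by rw [← map_add, hdec, e.symm_apply_apply])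
  rw [← hXd, ← hYd, e.apply_symm_apply, e.apply_symm_apply]
  exact ⟨rfl, rfl⟩

def criticalSubspace (d : ι → ℝ) : Submodule ℝ (Matrix ι ι ℝ) where
  carrier := {M | M.IsHermitian ∧ ∀ i j, d i ≤ 0 → d j < 0 → M i j = 0}
  add_mem' hA hB := ⟨hA.1.add hB.1, fun i j hi hj => by simp [hA.2 i j hi hj, hB.2 i j hi hj]⟩
  zero_mem' := ⟨isHermitian_zero, fun _ _ _ _ => rfl⟩
  smul_mem' c _ hA := ⟨hA.1.smul (IsSelfAdjoint.all c), fun i j hi hj => by simp [hA.2 i j hi hj]⟩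

theorem two_smul_eq_sum_single_add_single {M : Matrix ι ι ℝ} (hM : M.IsHermitian) :
    (2 : ℝ) • M = ∑ i, ∑ j, M i j • (single i j 1 + single j i 1) := by
  have hsum : ∑ i, ∑ j, M i j • single i j (1 : ℝ) = M := by
    conv_rhs => rw [matrix_eq_sum_single M]
    simp only [smul_single, smul_eq_mul, mul_one]
  have hsymm : ∑ i, ∑ j, M i j • single j i (1 : ℝ) = ∑ i, ∑ j, M i j • single i j 1 := by
    rw [Finset.sum_comm]
    exact Finset.sum_congr rfl fun i _ => Finset.sum_congr rfl fun j _ => by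
      rw [← hM.apply i j, star_trivial]
  simp only [smul_add, Finset.sum_add_distrib, hsymm, hsum, two_smul]

end Matrix

theorem ContinuousLinearEquiv.coe_affineSpan_image {k V W : Type*} [Ring k] [AddCommGroup V]
    [Module k V] [TopologicalSpace V] [AddCommGroup W] [Module k W] [TopologicalSpace W]
    (e : V ≃L[k] W) (s : Set V) : (affineSpan k (e '' s) : Set W) = e '' affineSpan k s := by
  simpa using congrArg ((↑) : AffineSubspace k W → Set W)
    (AffineSubspace.map_span (e : V →ₗ[k] W).toAffineMap s).symm

section TangentCone

variable {n : ℕ}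

theorem tangentConeAt_subset_of_isClosed {S C : Set (Mat n)} {x : Mat n} (hC : IsClosed C)
    (h : ∀ t : ℝ, 0 < t → ∀ s ∈ S, t • (s - x) ∈ C) : TangentConeAt S x ⊆ C :=
  closure_minimal (by rintro _ ⟨t, ht, s, hs, rfl⟩; exact h t ht s hs) hC

theorem mem_tangentConeAt_of_forall_pos {S : Set (Mat n)} {x h k : Mat n}
    (hk : ∀ ε : ℝ, 0 < ε → ∃ t : ℝ, 0 < t ∧ x + t • (h + ε • k) ∈ S) :
    h ∈ TangentConeAt S x := by
  have hlim : Tendsto (fun ε : ℝ => h + ε • k) (𝓝[>] 0) (𝓝 h) := by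
    have : Continuous (fun ε : ℝ => h + ε • k) := by fun_prop
    simpa using (this.tendsto 0).mono_left nhdsWithin_le_nhds
  refine mem_closure_of_tendsto hlim (eventually_nhdsWithin_of_forall fun ε hε => ?_)
  obtain ⟨t, ht, hS⟩ := hk ε hε
  exact ⟨t⁻¹, inv_pos.2 ht, _, hS, by
    rw [add_sub_cancel_left, smul_smul, inv_mul_cancel₀ ht.ne', one_smul]⟩

theorem ContinuousLinearEquiv.image_tangentConeAt (e : Mat n ≃L[ℝ] Mat n) (S : Set (Mat n))
    (x : Mat n) : e '' TangentConeAt S x = TangentConeAt (e '' S) (e x) := by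
  rw [TangentConeAt, e.image_closure, TangentConeAt]
  congr 1
  ext h
  constructor
  · rintro ⟨_, ⟨t, ht, s, hs, rfl⟩, rfl⟩
    exact ⟨t, ht, e s, ⟨s, hs, rfl⟩, by rw [map_smul, map_sub]⟩
  · rintro ⟨t, ht, _, ⟨s, hs, rfl⟩, rfl⟩
    exact ⟨t • (s - x), ⟨t, ht, s, hs, rfl⟩, by rw [map_smul, map_sub]⟩

theorem isHermitian_of_mem_tangentConeAt {X H : Mat n} (hX : X.IsHermitian)
    (hH : H ∈ TangentConeAt {A | A.PosSemidef} X) : H.IsHermitian :=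
  tangentConeAt_subset_of_isClosed (C := {H | H.IsHermitian})
    (isClosed_eq continuous_id.matrix_conjTranspose continuous_id)
    (fun t _ _ hs => (hs.1.sub hX).smul (IsSelfAdjoint.all t)) hH

theorem dotProduct_mulVec_nonneg_of_mem_tangentConeAt {X H : Mat n} {v : Fin n → ℝ}
    (hv : v ⬝ᵥ X *ᵥ v = 0) (hH : H ∈ TangentConeAt {A | A.PosSemidef} X) :
    0 ≤ v ⬝ᵥ H *ᵥ v :=
  tangentConeAt_subset_of_isClosed (C := {H | 0 ≤ v ⬝ᵥ H *ᵥ v})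
    (isClosed_le continuous_const
      (continuous_const.dotProduct (continuous_id.matrix_mulVec continuous_const)))
    (fun t ht s hs => by
      simpa [smul_mulVec, sub_mulVec, hv] using mul_nonneg ht.le (hs.dotProduct_mulVec_nonneg v))
    hH

theorem critSDP_orthogonalConj {P : Mat n} (hP : Pᵀ * P = 1) (X Y : Mat n) :
    CritSDP (orthogonalConj hP X) (orthogonalConj hP Y) = orthogonalConj hP '' CritSDP X Y := by
  have hPSD : orthogonalConj hP '' {A : Mat n | A.PosSemidef} = {A | A.PosSemidef} := by
    ext A
    rw [ContinuousLinearEquiv.image_eq_preimage_symm, Set.mem_preimage, Set.mem_ofPred_eq,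
      Set.mem_ofPred_eq, ← posSemidef_orthogonalConj_iff hP, ContinuousLinearEquiv.apply_symm_apply]
  have htangent : TangentConeAt {A | A.PosSemidef} (orthogonalConj hP X) =
      (orthogonalConj hP).symm ⁻¹' TangentConeAt {A | A.PosSemidef} X := by
    rw [← ContinuousLinearEquiv.image_eq_preimage_symm, ContinuousLinearEquiv.image_tangentConeAt,
      hPSD]
  have htrace (H : Mat n) :
      (H * orthogonalConj hP Y).trace = ((orthogonalConj hP).symm H * Y).trace := by
    rw [← trace_orthogonalConj hP ((orthogonalConj hP).symm H * Y), ← orthogonalConj_mul,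
      ContinuousLinearEquiv.apply_symm_apply]
  ext H
  simp only [ContinuousLinearEquiv.image_eq_preimage_symm, CritSDP, htangent, htrace,
    Set.mem_ofPred_eq, Set.mem_preimage]

end TangentCone

section DiagonalCriticalCone

variable {n : ℕ} (d : Fin n → ℝ)

local notation "𝒞" => CritSDP (diagonal fun i => max (d i) 0) (diagonal fun i => min (d i) 0)

theorem critSDP_diagonal_subset_criticalSubspace : 𝒞 ⊆ criticalSubspace d := by
  rintro H ⟨hT, htr⟩
  have hq (v : Fin n → ℝ) (hv : ∀ i, 0 < d i → v i = 0) : 0 ≤ v ⬝ᵥ H *ᵥ v := by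
    refine dotProduct_mulVec_nonneg_of_mem_tangentConeAt (Finset.sum_eq_zero fun i _ => ?_) hT
    rcases le_or_gt (d i) 0 with hi | hi <;> simp [mulVec_diagonal, hi, hv]
  have hsupp {i j k : Fin n} (hi : d i ≤ 0) (hj : d j ≤ 0) (hk : 0 < d k) : k ≠ i ∧ k ≠ j :=
    ⟨by rintro rfl; linarith, by rintro rfl; linarith⟩
  have hdiag_nonneg (i) (hi : d i ≤ 0) : 0 ≤ H i i := by
    simpa using hq (Pi.single i 1) fun k hk => Pi.single_eq_of_ne (hsupp hi hi hk).1 _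
  have hdiag (i) (hi : d i < 0) : H i i = 0 := by
    have hterms : ∀ k ∈ Finset.univ, H k k * min (d k) 0 ≤ 0 := by
      intro k _
      rcases le_or_gt (d k) 0 with hk | hk
      · rw [min_eq_left hk]
        exact mul_nonpos_of_nonneg_of_nonpos (hdiag_nonneg k hk) hk
      · simp [hk.le]
    simp only [trace, diag, mul_diagonal] at htr
    have := (Finset.sum_eq_zero_iff_of_nonpos hterms).1 htr i (Finset.mem_univ i)
    simpa [hi.le, hi.ne] using this
  have hH : H.IsHermitian :=
    isHermitian_of_mem_tangentConeAt (PosSemidef.diagonal fun i => le_max_right _ _).1 hT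
  refine ⟨hH, fun i j hi hj => ?_⟩
  rcases eq_or_ne i j with rfl | hij
  · exact hdiag i hj
  refine eq_zero_of_forall_nonneg_add_mul (a := H i i) fun c => ?_
  have := hq (Pi.single i 1 + (c / 2) • Pi.single j 1) fun k hk => by
    simp [Pi.single_eq_of_ne (hsupp hi hj.le hk).1, Pi.single_eq_of_ne (hsupp hi hj.le hk).2]
  simp [mulVec_add, mulVec_smul, dotProduct_add, add_dotProduct, hdiag j hj,
    ← hH.apply j i] at this
  linarith

theorem mem_critSDP_diagonal_of_posSemidef {B : Mat n} (hB : B.PosSemidef)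
    (hBd : ∀ i, d i < 0 → B i i = 0) : B ∈ 𝒞 := by
  have hD : (diagonal fun i => max (d i) 0).PosSemidef :=
    PosSemidef.diagonal fun i => le_max_right (d i) 0
  refine ⟨subset_closure ⟨1, one_pos, _, hD.add hB, by rw [add_sub_cancel_left, one_smul]⟩, ?_⟩
  simp only [trace, diag, mul_diagonal]
  exact Finset.sum_eq_zero fun i _ => by
    rcases le_or_gt 0 (d i) with hi | hi <;> simp [hi, hBd]

theorem vecMulVec_self_mem_critSDP_diagonal {u : Fin n → ℝ} (hu : ∀ i, d i < 0 → u i = 0) :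
    vecMulVec u u ∈ 𝒞 :=
  mem_critSDP_diagonal_of_posSemidef d (posSemidef_vecMulVec_self u)
    fun i hi => by simp [vecMulVec_apply, hu i hi]

theorem single_add_single_mem_span_critSDP_diagonal {i j : Fin n} (hi : 0 ≤ d i) (hj : 0 ≤ d j) :
    single i j 1 + single j i 1 ∈ Submodule.span ℝ 𝒞 := by
  have hsupp {k} (hk : d k < 0) : k ≠ i ∧ k ≠ j :=
    ⟨by rintro rfl; linarith, by rintro rfl; linarith⟩
  have hmem {u : Fin n → ℝ} (hu : ∀ k, d k < 0 → u k = 0) :=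
    Submodule.subset_span (R := ℝ) (vecMulVec_self_mem_critSDP_diagonal d hu)
  have hpolar : single i j (1 : ℝ) + single j i 1 =
      vecMulVec (Pi.single i 1 + Pi.single j 1) (Pi.single i 1 + Pi.single j 1) -
        vecMulVec (Pi.single i 1) (Pi.single i 1) - vecMulVec (Pi.single j 1) (Pi.single j 1) := by
    simp only [single_eq_single_vecMulVec_single, add_vecMulVec, vecMulVec_add]
    abel
  rw [hpolar]
  refine sub_mem (sub_mem (hmem ?_) (hmem ?_)) (hmem ?_) <;> intro k hk <;>
    simp [Pi.single_eq_of_ne (hsupp hk).1, Pi.single_eq_of_ne (hsupp hk).2]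

theorem single_add_single_mem_critSDP_diagonal {i j : Fin n} (hi : 0 < d i) (hj : d j < 0) :
    single i j 1 + single j i 1 ∈ 𝒞 := by
  have hij : i ≠ j := by rintro rfl; linarith
  refine ⟨mem_tangentConeAt_of_forall_pos (k := single j j 1) fun ε hε =>
    ⟨d i * ε, by positivity, ?_⟩, ?_⟩
  · set u : Fin n → ℝ := Pi.single i 1 + ε • Pi.single j 1
    set f : Fin n → ℝ := fun k => if k = i then 0 else max (d k) 0
    have hu : vecMulVec u u = single i i 1 + ε • single i j 1 + ε • single j i 1 +
        (ε * ε) • single j j 1 := by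
      simp only [u, add_vecMulVec, vecMulVec_add, smul_vecMulVec, vecMulVec_smul,
        ← single_eq_single_vecMulVec_single]
      module
    have hD : diagonal (fun k => max (d k) 0) = diagonal f + d i • single i i 1 := by
      rw [← diagonal_single, ← diagonal_smul, diagonal_add]
      congr 1
      ext k
      by_cases hk : k = i
      · subst hk; simp [f, hi.le]
      · simp [f, hk]
    have hf : (diagonal f).PosSemidef :=
      PosSemidef.diagonal fun k => by by_cases hk : k = i <;> simp [f, hk]
    -- completing the square in the `(i, j)` block, which is where `t = d i * ε` comes from
    have : diagonal (fun k => max (d k) 0) +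
        (d i * ε) • (single i j 1 + single j i 1 + ε • single j j 1) =
        diagonal f + d i • vecMulVec u u := by
      rw [hD, hu]
      module
    rw [this]
    exact hf.add ((posSemidef_vecMulVec_self u).smul hi.le)
  · refine Finset.sum_eq_zero fun k _ => ?_
    rw [diag_apply, mul_diagonal, Matrix.add_apply, single_apply, single_apply, if_neg, if_neg,
      add_zero, zero_mul]
    · rintro ⟨rfl, rfl⟩; exact hij rfl
    · rintro ⟨rfl, rfl⟩; exact hij rfl

theorem criticalSubspace_le_span_critSDP_diagonal : criticalSubspace d ≤ Submodule.span ℝ 𝒞 := by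
  rintro M ⟨hM, hMd⟩
  have hgen (i j : Fin n) : M i j • (single i j 1 + single j i 1) ∈ Submodule.span ℝ 𝒞 := by
    by_cases hz : M i j = 0
    · simp [hz]
    have hji : M j i ≠ 0 := by rwa [← hM.apply j i, star_trivial]
    refine Submodule.smul_mem _ _ ?_
    rcases le_or_gt 0 (d i) with hi | hi <;> rcases le_or_gt 0 (d j) with hj | hj
    · exact single_add_single_mem_span_critSDP_diagonal d hi hj
    · exact Submodule.subset_span <| single_add_single_mem_critSDP_diagonal d
        (hi.lt_of_ne fun h => hz (hMd i j h.ge hj)) hj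
    · rw [add_comm]
      exact Submodule.subset_span <| single_add_single_mem_critSDP_diagonal d
        (hj.lt_of_ne fun h => hji (hMd j i h.ge hi)) hi
    · exact absurd (hMd i j hi.le hj) hz
  have h2M := two_smul_eq_sum_single_add_single hM
  rw [← inv_smul_smul₀ (two_ne_zero (α := ℝ)) M, h2M]
  exact Submodule.smul_mem _ _
    (Submodule.sum_mem _ fun i _ => Submodule.sum_mem _ fun j _ => hgen i j)

theorem coe_affineSpan_critSDP_diagonal :
    (affineSpan ℝ 𝒞 : Set (Mat n)) = criticalSubspace d := by
  have h0 := mem_critSDP_diagonal_of_posSemidef d PosSemidef.zero fun _ _ => rfl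
  rw [← Set.insert_eq_of_mem h0, affineSpan_insert_zero]
  exact congrArg _ <| le_antisymm
    (Submodule.span_le.2 (critSDP_diagonal_subset_criticalSubspace d))
    (criticalSubspace_le_span_critSDP_diagonal d)

end DiagonalCriticalCone

theorem statement16_general {n : ℕ} (X Y : Mat n)
    (hX : X.PosSemidef) (hY : (-Y).PosSemidef) (hXY : (X * Y).trace = 0)
    (P : Mat n) (hP : Pᵀ * P = 1)
    (d : Fin n → ℝ)
    (hdec : X + Y = P * Matrix.diagonal d * Pᵀ) :
    ((affineSpan ℝ (CritSDP X Y) : AffineSubspace ℝ (Mat n)) : Set (Mat n)) =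
      {H : Mat n | H.IsHermitian ∧ ∀ i j : Fin n,
        ((d i = 0 ∧ d j < 0) ∨ (d i < 0 ∧ d j < 0)) → (Pᵀ * H * P) i j = 0} := by
  obtain ⟨rfl, rfl⟩ := hX.eq_orthogonalConj_diagonal_max_min hP hY hXY hdec
  rw [critSDP_orthogonalConj, ContinuousLinearEquiv.coe_affineSpan_image,
    coe_affineSpan_critSDP_diagonal, ContinuousLinearEquiv.image_eq_preimage_symm]
  ext H
  refine and_congr ?_ (forall₂_congr fun i j => ?_)
  · rw [← isHermitian_orthogonalConj_iff hP, ContinuousLinearEquiv.apply_symm_apply]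
  · rw [← or_and_right, and_imp, ← le_iff_eq_or_lt, orthogonalConj_symm_apply]

theorem statement16 {n : ℕ} (X Y : Mat n)
    (hX : X.PosSemidef) (hY : (-Y).PosSemidef) (hXY : (X * Y).trace = 0)
    (P : Mat n) (hP : Pᵀ * P = 1)
    (d : Fin n → ℝ) (hd : Antitone d)
    (hdec : X + Y = P * Matrix.diagonal d * Pᵀ) :
    ((affineSpan ℝ (CritSDP X Y) : AffineSubspace ℝ (Mat n)) : Set (Mat n)) =
      {H : Mat n | H.IsHermitian ∧ ∀ i j : Fin n,
        ((d i = 0 ∧ d j < 0) ∨ (d i < 0 ∧ d j < 0)) → (Pᵀ * H * P) i j = 0} :=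
  statement16_general X Y hX hY hXY P hP d hdec

end
end

section
/- Let w ∈ ℝⁿ satisfy ⟨w, aᵛ − aᵛ'⟩ = 0 and ⟨w, bᵘ⟩ = 0 for all pairs (ν, μ), (ν', μ') in the index set η, where η is invariant under any permutation Q fixing both λ(X) and λ(Y) (i.e., for (ν, μ) ∈ η and such Q there is (ν', μ') ∈ η with aᵛ' = Q aᵛ and bᵘ' = Q bᵘ). Then for every block γ of coordinates on which both λ(X) and λ(Y) are constant, if there exist i, j ∈ γ and (ν, μ) ∈ η with (aᵛ)_i ≠ (aᵛ)_j or (bᵘ)_i ≠ (bᵘ)_j, then w is constant on γ: w_γ = ρ·1 for some ρ ∈ ℝ. -/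
/- A transposition of two coordinates i, j of a block γ fixes λ(X) and λ(Y), so it maps every
datum of η to a datum of η. Orthogonality of w to a vector v and to its image under the swap
forces (w_i - w_j)(v_i - v_j) = 0, so w_i = w_j unless every datum agrees at i and j. If one
datum separates i₀, j₀ ∈ γ, then for each k ∈ γ it separates k from i₀ or from j₀; hence
w_k = w_{i₀} = w_{j₀}. -/

open Matrix

theorem Equiv.comp_swap_eq_self {α β : Type*} [DecidableEq α] {f : α → β} {i j : α}
    (h : f i = f j) : f ∘ Equiv.swap i j = f := by
  rw [Equiv.comp_swap_eq_update, h, Function.update_eq_self, ← h, Function.update_eq_self]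

theorem Matrix.dotProduct_comp_swap {ι R : Type*} [Fintype ι] [DecidableEq ι] [CommRing R]
    (w v : ι → R) (i j : ι) :
    w ⬝ᵥ (v ∘ Equiv.swap i j) = w ⬝ᵥ v - (w i - w j) * (v i - v j) := by
  have hv : v ∘ Equiv.swap i j = v - (v i - v j) • (Pi.single i 1 - Pi.single j 1) := by
    funext k
    rcases eq_or_ne k i with rfl | hki
    · rcases eq_or_ne k j with rfl | hkj <;> simp [*]
    · rcases eq_or_ne k j with rfl | hkj <;> simp [*, Equiv.swap_apply_of_ne_of_ne]
  rw [hv, dotProduct_sub, dotProduct_smul, dotProduct_sub, dotProduct_single, dotProduct_single]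
  simp only [mul_one, smul_eq_mul]
  ring

theorem Matrix.eq_or_eq_of_dotProduct_comp_swap {ι R : Type*} [Fintype ι] [DecidableEq ι]
    [CommRing R] [IsDomain R] {w v : ι → R} {i j : ι}
    (h : w ⬝ᵥ (v ∘ Equiv.swap i j) = w ⬝ᵥ v) : w i = w j ∨ v i = v j := by
  rwa [dotProduct_comp_swap, sub_eq_self, mul_eq_zero, sub_eq_zero, sub_eq_zero] at h

theorem Set.exists_forall_eq_of_eq_or_eq {α β δ : Type*} {s : Set α} {f : α → β} {g : α → δ}
    (hfg : ∀ i ∈ s, ∀ j ∈ s, f i = f j ∨ g i = g j) (hg : ∃ i ∈ s, ∃ j ∈ s, g i ≠ g j) :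
    ∃ c, ∀ k ∈ s, f k = c := by
  obtain ⟨i, hi, j, hj, hgij⟩ := hg
  have hfij : f i = f j := (hfg i hi j hj).resolve_right hgij
  refine ⟨f i, fun k hk => ?_⟩
  rcases hfg k hk i hi with h | hki
  · exact h
  rcases hfg k hk j hj with h | hkj
  · exact h.trans hfij.symm
  exact absurd (hki.symm.trans hkj) hgij

theorem statement17_general {n p q : ℕ}
    (lamX lamY : Fin n → ℝ)
    (a : Fin p → (Fin n → ℝ)) (b : Fin q → (Fin n → ℝ))
    (η : Set (Fin p × Fin q)) (w : Fin n → ℝ)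
    (hinv : ∀ νμ ∈ η, ∀ σ : Equiv.Perm (Fin n),
      lamX ∘ σ = lamX → lamY ∘ σ = lamY →
      ∃ νμ' ∈ η, a νμ'.1 = a νμ.1 ∘ σ ∧ b νμ'.2 = b νμ.2 ∘ σ)
    (hw : ∀ νμ ∈ η, ∀ νμ' ∈ η,
      w ⬝ᵥ (a νμ.1 - a νμ'.1) = 0 ∧ w ⬝ᵥ b νμ.2 = 0)
    (γ : Set (Fin n))
    (hγconst : ∀ i ∈ γ, ∀ j ∈ γ, lamX i = lamX j ∧ lamY i = lamY j)
    (hsep : ∃ i ∈ γ, ∃ j ∈ γ, ∃ νμ ∈ η, a νμ.1 i ≠ a νμ.1 j ∨ b νμ.2 i ≠ b νμ.2 j) :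
    ∃ ρ : ℝ, ∀ i ∈ γ, w i = ρ := by
  obtain ⟨i₀, hi₀, j₀, hj₀, νμ, hνμ, hs⟩ := hsep
  refine Set.exists_forall_eq_of_eq_or_eq (g := fun k => (a νμ.1 k, b νμ.2 k))
    (fun i hi j hj => ?_) ⟨i₀, hi₀, j₀, hj₀, by rwa [Ne, Prod.mk.injEq, not_and_or]⟩
  obtain ⟨hX, hY⟩ := hγconst i hi j hj
  obtain ⟨νμ', hνμ', ha, hb⟩ := hinv νμ hνμ (Equiv.swap i j)
    (Equiv.comp_swap_eq_self hX) (Equiv.comp_swap_eq_self hY)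
  obtain ⟨hwa, hwb⟩ := hw νμ hνμ νμ' hνμ'
  rcases eq_or_eq_of_dotProduct_comp_swap (w := w) (v := a νμ.1)
    (by rw [← ha, eq_comm, ← sub_eq_zero, ← dotProduct_sub, hwa]) with h | ha
  · exact .inl h
  rcases eq_or_eq_of_dotProduct_comp_swap (w := w) (v := b νμ.2)
    (by rw [← hb, (hw νμ' hνμ' νμ hνμ).2, hwb]) with h | hb
  · exact .inl h
  exact .inr (Prod.ext ha hb)

theorem statement17 {n p q : ℕ}
    (lamX lamY : Fin n → ℝ)
    (a : Fin p → (Fin n → ℝ)) (b : Fin q → (Fin n → ℝ))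
    (η : Set (Fin p × Fin q)) (w : Fin n → ℝ)
    (hinv : ∀ νμ ∈ η, ∀ σ : Equiv.Perm (Fin n),
      lamX ∘ σ = lamX → lamY ∘ σ = lamY →
      ∃ νμ' ∈ η, a νμ'.1 = a νμ.1 ∘ σ ∧ b νμ'.2 = b νμ.2 ∘ σ)
    (hw : ∀ νμ ∈ η, ∀ νμ' ∈ η,
      w ⬝ᵥ (a νμ.1 - a νμ'.1) = 0 ∧ w ⬝ᵥ b νμ.2 = 0)
    (γ : Set (Fin n))
    (hγconst : ∀ i ∈ γ, ∀ j ∈ γ, lamX i = lamX j ∧ lamY i = lamY j)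
    (hγmax : ∀ k : Fin n, (∀ i ∈ γ, lamX k = lamX i ∧ lamY k = lamY i) → k ∈ γ)
    (hsep : ∃ i ∈ γ, ∃ j ∈ γ, ∃ νμ ∈ η, a νμ.1 i ≠ a νμ.1 j ∨ b νμ.2 i ≠ b νμ.2 j) :
    ∃ ρ : ℝ, ∀ i ∈ γ, w i = ρ :=
  statement17_general lamX lamY a b η w hinv hw γ hγconst hsep
end
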